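/- arXiv:math-ph/0412080 — 4 statements merged into one kernel-verified Lean document; each statement's English description precedes it below -/
import Mathlib

section
/- Let φ₁,…,φₙ ∈ L²(ℝ³;ℂ), let h, k : ℝ³ → ℂ be bounded and measurable, and define the n×n matrices M_{αβ} = ∫ conj(φ_α(x)) φ_β(x) |h(x)|² dx and K_{αβ} = ∫ conj(φ_α(x)) φ_β(x) |k(x)|² dx. Assume M is invertible. Then Σ_{i=1}^n ∫_{(ℝ³)ⁿ} (1/n!) |det[φ_α(x_j)]_{α,j}|² · ( ∏_{j≠i} |h(x_j)|² ) · |k(x_i)|² dx₁⋯dxₙ = (det M) · Tr( K M^{−1} ). -/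
/-!
Expanding `|det [φ_α(x_j)]|²` as a double sum over permutations `σ, τ` makes every summand a
product of one-variable integrals, so by Fubini the `i`-th term is
`(1/n!) ∑_{σ,τ} sgn σ sgn τ ∏_j A_j(σ j, τ j)` with `A_i = K` and `A_j = M` for `j ≠ i`.
For fixed `τ` the sum over `σ` is `sgn τ` times the determinant of `M` with column `τ i` replaced
by that of `K`. Summing over `i`, each `τ` contributes `∑_c det (M with column c taken from K)`,
which is `Tr (adj M * K)` by Cramer's rule, and `adj M = det M • M⁻¹`.
-/

noncomputable section

open MeasureTheory
open scoped BigOperators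

abbrev E3 := EuclideanSpace ℝ (Fin 3)

open Matrix ComplexConjugate
open Equiv (Perm)

section Algebra

variable {n R : Type*} [DecidableEq n]

theorem of_update_const_apply_perm_symm (M K : Matrix n n R) (i : n) (τ : Perm n) :
    of (fun a c => Function.update (fun _ => M) i K (τ.symm c) a c) =
      M.updateCol (τ i) fun a => K a (τ i) := by
  ext a c
  rcases eq_or_ne c (τ i) with rfl | hc
  · simp
  · simp [hc, τ.symm_apply_eq.not.2 (Ne.symm hc).symm]

variable [Fintype n] [CommRing R]

theorem sum_sign_mul_prod_apply_perm (A : n → Matrix n n R) (τ : Perm n) :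
    ∑ σ : Perm n, (Perm.sign σ : R) * ∏ j, A j (σ j) (τ j) =
      Perm.sign τ * det (of fun a c => A (τ.symm c) a c) := by
  rw [← det_permute', det_apply']
  simp

theorem sum_sign_mul_sign_mul_prod (A : n → Matrix n n R) :
    ∑ σ : Perm n, ∑ τ : Perm n, (Perm.sign σ : R) * Perm.sign τ * ∏ j, A j (σ j) (τ j) =
      ∑ τ : Perm n, det (of fun a c => A (τ.symm c) a c) := by
  rw [Finset.sum_comm]
  refine Finset.sum_congr rfl fun τ _ => ?_
  have hsq : (Perm.sign τ : R) * Perm.sign τ = 1 := by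
    rw [← Int.cast_mul, ← Units.val_mul, Int.units_mul_self, Units.val_one, Int.cast_one]
  calc ∑ σ : Perm n, (Perm.sign σ : R) * Perm.sign τ * ∏ j, A j (σ j) (τ j)
      = Perm.sign τ * ∑ σ : Perm n, (Perm.sign σ : R) * ∏ j, A j (σ j) (τ j) := by
        rw [Finset.mul_sum]; exact Finset.sum_congr rfl fun σ _ => by ring
    _ = det (of fun a c => A (τ.symm c) a c) := by
        rw [sum_sign_mul_prod_apply_perm, ← mul_assoc, hsq, one_mul]

theorem sum_det_updateCol_eq_trace_adjugate_mul (M K : Matrix n n R) :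
    ∑ c, det (M.updateCol c fun a => K a c) = trace (adjugate M * K) := by
  refine Finset.sum_congr rfl fun c _ => ?_
  rw [← cramer_apply, cramer_eq_adjugate_mulVec]
  simp [mulVec, mul_apply, dotProduct]

theorem sum_sum_sign_mul_sign_mul_prod_update (M K : Matrix n n R) :
    ∑ i, ∑ σ : Perm n, ∑ τ : Perm n, (Perm.sign σ : R) * Perm.sign τ *
        ∏ j, Function.update (fun _ => M) i K j (σ j) (τ j) =
      (Fintype.card n).factorial * trace (adjugate M * K) := by
  simp_rw [sum_sign_mul_sign_mul_prod, of_update_const_apply_perm_symm]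
  rw [Finset.sum_comm]
  simp_rw [fun τ : Perm n => Equiv.sum_comp τ fun c => det (M.updateCol c fun a => K a c),
    sum_det_updateCol_eq_trace_adjugate_mul, Finset.sum_const, Finset.card_univ,
    Fintype.card_perm, nsmul_eq_mul]

theorem trace_adjugate_mul_eq_det_mul_trace_mul_inv (M K : Matrix n n R) (hM : IsUnit M.det) :
    trace (adjugate M * K) = M.det * trace (K * M⁻¹) := by
  rw [Matrix.inv_def, Matrix.mul_smul, trace_smul, trace_mul_comm, smul_eq_mul, ← mul_assoc,
    Ring.mul_inverse_cancel _ hM, one_mul]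

end Algebra

section Integral

variable {n α 𝕜 : Type*} [Fintype n] [DecidableEq n] [RCLike 𝕜]

theorem norm_det_sq_mul_prod_eq_sum_perm (A : Matrix n n 𝕜) (w : n → 𝕜) :
    ((‖A.det‖ ^ 2 : ℝ) : 𝕜) * ∏ j, w j =
      ∑ σ : Perm n, ∑ τ : Perm n, (Perm.sign σ : 𝕜) * Perm.sign τ *
        ∏ j, conj (A (σ j) j) * A (τ j) j * w j := by
  have hconj : conj A.det = ∑ σ : Perm n, (Perm.sign σ : 𝕜) * ∏ j, conj (A (σ j) j) := by
    rw [RingHom.map_det, det_apply']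
    simp
  rw [RCLike.ofReal_pow, ← RCLike.conj_mul, hconj, det_apply', Finset.sum_mul_sum, Finset.sum_mul]
  refine Finset.sum_congr rfl fun σ _ => ?_
  rw [Finset.sum_mul]
  refine Finset.sum_congr rfl fun τ _ => ?_
  simp_rw [Finset.prod_mul_distrib]
  ring

variable [MeasurableSpace α] {μ : Measure α}

def gramMatrix (μ : Measure α) (φ : n → α → 𝕜) (w : α → 𝕜) : Matrix n n 𝕜 :=
  of fun a b => ∫ x, conj (φ a x) * φ b x * w x ∂μ

theorem integrable_conj_mul_mul_ofReal_norm_sq {f g h : α → 𝕜} (hf : MemLp f 2 μ)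
    (hg : MemLp g 2 μ) (hh : AEStronglyMeasurable h μ) (hbdd : ∃ B, ∀ x, ‖h x‖ ≤ B) :
    Integrable (fun x => conj (f x) * g x * ((‖h x‖ ^ 2 : ℝ) : 𝕜)) μ := by
  obtain ⟨B, hB⟩ := hbdd
  refine (hf.star.integrable_mul hg).mul_bdd (c := B ^ 2) ?_ (ae_of_all _ fun x => ?_)
  · exact RCLike.continuous_ofReal.comp_aestronglyMeasurable (hh.norm.pow 2)
  · rw [RCLike.norm_ofReal, abs_of_nonneg (by positivity)]
    exact pow_le_pow_left₀ (norm_nonneg _) (hB x) 2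

theorem integral_norm_det_sq_mul_prod_eq_sum_perm [SigmaFinite μ] (φ : n → α → 𝕜) (w : n → α → 𝕜)
    (hint : ∀ j a b, Integrable (fun x => conj (φ a x) * φ b x * w j x) μ) :
    ∫ X, ((‖det (of fun a j => φ a (X j))‖ ^ 2 : ℝ) : 𝕜) * ∏ j, w j (X j)
        ∂(Measure.pi fun _ => μ) =
      ∑ σ : Perm n, ∑ τ : Perm n, (Perm.sign σ : 𝕜) * Perm.sign τ *
        ∏ j, gramMatrix μ φ (w j) (σ j) (τ j) := by
  simp_rw [norm_det_sq_mul_prod_eq_sum_perm, of_apply]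
  have hprod : ∀ σ τ : Perm n, Integrable (fun X : n → α =>
      ∏ j, conj (φ (σ j) (X j)) * φ (τ j) (X j) * w j (X j)) (Measure.pi fun _ => μ) :=
    fun σ τ => Integrable.fintype_prod_dep fun j => hint j (σ j) (τ j)
  rw [integral_finsetSum _ fun σ _ => integrable_finsetSum _ fun τ _ => (hprod σ τ).const_mul _]
  refine Finset.sum_congr rfl fun σ _ => ?_
  rw [integral_finsetSum _ fun τ _ => (hprod σ τ).const_mul _]
  refine Finset.sum_congr rfl fun τ _ => ?_
  rw [integral_const_mul,
    integral_fintype_prod_eq_prod fun j x => conj (φ (σ j) x) * φ (τ j) x * w j x]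
  rfl

theorem integral_slater_term_eq_sum_perm [SigmaFinite μ] (φ : n → α → 𝕜) (hφ : ∀ a, MemLp (φ a) 2 μ)
    {h k : α → 𝕜} (hh : AEStronglyMeasurable h μ) (hk : AEStronglyMeasurable k μ)
    (hhb : ∃ B, ∀ x, ‖h x‖ ≤ B) (hkb : ∃ B, ∀ x, ‖k x‖ ≤ B) {M K : Matrix n n 𝕜}
    (hM : gramMatrix μ φ (fun x => ((‖h x‖ ^ 2 : ℝ) : 𝕜)) = M)
    (hK : gramMatrix μ φ (fun x => ((‖k x‖ ^ 2 : ℝ) : 𝕜)) = K) (i : n) :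
    ((∫ X, 1 / ((Fintype.card n).factorial : ℝ) * ‖det (of fun a j => φ a (X j))‖ ^ 2 *
        (∏ j ∈ Finset.univ.erase i, ‖h (X j)‖ ^ 2) * ‖k (X i)‖ ^ 2
          ∂(Measure.pi fun _ => μ) : ℝ) : 𝕜) =
      ((Fintype.card n).factorial : 𝕜)⁻¹ *
        ∑ σ : Perm n, ∑ τ : Perm n, (Perm.sign σ : 𝕜) * Perm.sign τ *
          ∏ j, Function.update (fun _ => M) i K j (σ j) (τ j) := by
  subst hM hK
  set g := Function.update (fun _ => h) i k
  have hweights : ∀ X : n → α, (∏ j ∈ Finset.univ.erase i, ‖h (X j)‖ ^ 2) * ‖k (X i)‖ ^ 2 =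
      ∏ j, ‖g j (X j)‖ ^ 2 := fun X => by
    rw [← Finset.prod_erase_mul _ _ (Finset.mem_univ i)]
    refine congrArg₂ _ (Finset.prod_congr rfl fun j hj => ?_) (by simp [g])
    simp [g, Function.update_of_ne (Finset.ne_of_mem_erase hj)]
  have hgram : ∀ j, gramMatrix μ φ (fun x => ((‖g j x‖ ^ 2 : ℝ) : 𝕜)) =
      Function.update (fun _ => gramMatrix μ φ fun x => ((‖h x‖ ^ 2 : ℝ) : 𝕜)) i
        (gramMatrix μ φ fun x => ((‖k x‖ ^ 2 : ℝ) : 𝕜)) j := fun j => by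
    rcases eq_or_ne j i with rfl | hj <;> simp [g, *]
  have hint : ∀ j a b, Integrable
      (fun x => conj (φ a x) * φ b x * ((‖g j x‖ ^ 2 : ℝ) : 𝕜)) μ := fun j a b => by
    rcases eq_or_ne j i with rfl | hj
    · simpa [g] using integrable_conj_mul_mul_ofReal_norm_sq (hφ a) (hφ b) hk hkb
    · simpa [g, hj] using integrable_conj_mul_mul_ofReal_norm_sq (hφ a) (hφ b) hh hhb
  have hintegrand : ∀ X : n → α,
      ((1 / ((Fintype.card n).factorial : ℝ) * ‖det (of fun a j => φ a (X j))‖ ^ 2 *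
        (∏ j ∈ Finset.univ.erase i, ‖h (X j)‖ ^ 2) * ‖k (X i)‖ ^ 2 : ℝ) : 𝕜) =
      ((Fintype.card n).factorial : 𝕜)⁻¹ * (((‖det (of fun a j => φ a (X j))‖ ^ 2 : ℝ) : 𝕜) *
        ∏ j, ((‖g j (X j)‖ ^ 2 : ℝ) : 𝕜)) := fun X => by
    rw [← RCLike.ofReal_prod, ← hweights]
    push_cast
    ring
  simp_rw [← integral_ofReal, hintegrand]
  rw [integral_const_mul, integral_norm_det_sq_mul_prod_eq_sum_perm φ _ hint]
  simp_rw [hgram]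

end Integral

theorem slater_sum_eq_det_trace
    (n : ℕ) (φ : Fin n → E3 → ℂ)
    (hφ : ∀ α, MemLp (φ α) 2 (volume : Measure E3))
    (h k : E3 → ℂ) (hmeas : Measurable h) (kmeas : Measurable k)
    (hbdd : ∃ B, ∀ x, ‖h x‖ ≤ B) (kbdd : ∃ B, ∀ x, ‖k x‖ ≤ B)
    (M K : Matrix (Fin n) (Fin n) ℂ)
    (hM : ∀ α β, M α β =
      ∫ x : E3, (starRingEnd ℂ) (φ α x) * φ β x * ((‖h x‖ ^ 2 : ℝ) : ℂ))
    (hK : ∀ α β, K α β =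
      ∫ x : E3, (starRingEnd ℂ) (φ α x) * φ β x * ((‖k x‖ ^ 2 : ℝ) : ℂ))
    (hMinv : IsUnit M.det) :
    ((∑ i : Fin n, ∫ X : Fin n → E3,
        (1 / (Nat.factorial n : ℝ)) *
          ‖Matrix.det (Matrix.of fun α j => φ α (X j))‖ ^ 2 *
          (∏ j ∈ Finset.univ.erase i, ‖h (X j)‖ ^ 2) * ‖k (X i)‖ ^ 2 : ℝ) : ℂ)
      = M.det * (K * M⁻¹).trace := by
  have hterm := fun i => integral_slater_term_eq_sum_perm (μ := volume) φ hφ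
    hmeas.aestronglyMeasurable kmeas.aestronglyMeasurable hbdd kbdd
    (Matrix.ext fun a b => (hM a b).symm) (Matrix.ext fun a b => (hK a b).symm) i
  simp only [Fintype.card_fin, RCLike.ofReal_eq_complex_ofReal] at hterm
  rw [Complex.ofReal_sum]
  refine (Finset.sum_congr rfl fun i _ => hterm i).trans ?_
  rw [← Finset.mul_sum, sum_sum_sign_mul_sign_mul_prod_update, Fintype.card_fin,
    inv_mul_cancel_left₀ (by exact_mod_cast n.factorial_ne_zero),
    trace_adjugate_mul_eq_det_mul_trace_mul_inv M K hMinv]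
end
end

section
/- There exists a universal constant C with the following property. Let ℓ > 0, n ≥ 1, and let P ⊂ (π/ℓ)·{1,2,3,…}³ with |P| = n be such that |p| ≤ |q| for every p ∈ P and every q ∈ (π/ℓ)·{1,2,3,…}³ ∖ P. For p ∈ P let φ_p(x) = (2/ℓ)^{3/2} ∏_{a=1}^3 sin(p_a x_a) on [0,ℓ]³. Define γ(x,x') = Σ_{p∈P} φ_p(x) φ_p(x') and ρ(x) = γ(x,x). Then for all x, x' ∈ [0,ℓ]³: ρ(x) ρ(x') − γ(x,x')² ≤ C |x − x'|² (n/ℓ³)^{8/3}. -/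
noncomputable section

open Real
open scoped BigOperators

/-- The Dirichlet eigenfunction of the Laplacian on the cube `[0,ℓ]³` with quantum
numbers `m ∈ {1,2,…}³` (formula valid on the cube). -/
def sineEig (ℓ : ℝ) (m : Fin 3 → ℕ) (x : E3) : ℝ :=
  (2 / ℓ) ^ ((3:ℝ)/2) * ∏ a : Fin 3, Real.sin (π * (m a : ℝ) / ℓ * x a)

-- Lagrange identity
lemma lagrange_id {n : ℕ} (a b : Fin n → ℝ) :
    (∑ i, a i ^ 2) * (∑ i, b i ^ 2) - (∑ i, a i * b i) ^ 2
      = (1/2) * ∑ i, ∑ j, (a i * b j - a j * b i) ^ 2 := by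
  have h1 : (∑ i, a i ^ 2) * (∑ j, b j ^ 2) = ∑ i, ∑ j, a i ^ 2 * b j ^ 2 :=
    Finset.sum_mul_sum _ _ _ _
  have h2 : (∑ i, a i * b i) ^ 2 = ∑ i, ∑ j, (a i * b i) * (a j * b j) := by
    rw [sq]; exact Finset.sum_mul_sum _ _ _ _
  have h3 : ∑ i, ∑ j, (a i * b j - a j * b i) ^ 2
      = ∑ i, ∑ j, (a i ^ 2 * b j ^ 2 + a j ^ 2 * b i ^ 2 - 2 * ((a i * b i) * (a j * b j))) := by
    refine Finset.sum_congr rfl fun i _ => Finset.sum_congr rfl fun j _ => by ring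
  have h4 : ∑ i : Fin n, ∑ j : Fin n, a j ^ 2 * b i ^ 2 = ∑ i : Fin n, ∑ j : Fin n, a i ^ 2 * b j ^ 2 :=
    Finset.sum_comm
  rw [h1, h2, h3]
  simp only [Finset.sum_add_distrib, Finset.sum_sub_distrib, ← Finset.mul_sum] at *
  rw [h4]; ring

-- |sin s - sin t| ≤ |s - t|
lemma sin_diff_le (s t : ℝ) : |Real.sin s - Real.sin t| ≤ |s - t| := by
  rw [Real.sin_sub_sin]
  calc |2 * Real.sin ((s - t)/2) * Real.cos ((s + t)/2)|
      = 2 * |Real.sin ((s-t)/2)| * |Real.cos ((s+t)/2)| := by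
        rw [abs_mul, abs_mul]; norm_num
    _ ≤ 2 * |(s-t)/2| * 1 := by
        refine mul_le_mul (by
          have := Real.abs_sin_le_abs (x := (s-t)/2)
          nlinarith [abs_nonneg ((s-t)/2)]) (Real.abs_cos_le_one _) (abs_nonneg _) (by positivity)
    _ = |s - t| := by rw [abs_div, abs_two]; ring

lemma prod_sin_diff (u v : Fin 3 → ℝ) :
    |∏ a, Real.sin (u a) - ∏ a, Real.sin (v a)| ≤ ∑ a, |u a - v a| := by
  have hs : ∀ t : ℝ, |Real.sin t| ≤ 1 := fun t => Real.abs_sin_le_one t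
  rw [Fin.prod_univ_three, Fin.prod_univ_three, Fin.sum_univ_three]
  have key : Real.sin (u 0) * Real.sin (u 1) * Real.sin (u 2)
      - Real.sin (v 0) * Real.sin (v 1) * Real.sin (v 2)
      = (Real.sin (u 0) - Real.sin (v 0)) * (Real.sin (u 1) * Real.sin (u 2))
        + Real.sin (v 0) * ((Real.sin (u 1) - Real.sin (v 1)) * Real.sin (u 2))
        + (Real.sin (v 0) * Real.sin (v 1)) * (Real.sin (u 2) - Real.sin (v 2)) := by ring
  rw [key]
  have h0 := sin_diff_le (u 0) (v 0)
  have h1 := sin_diff_le (u 1) (v 1)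
  have h2 := sin_diff_le (u 2) (v 2)
  calc |_| ≤ |(Real.sin (u 0) - Real.sin (v 0)) * (Real.sin (u 1) * Real.sin (u 2))|
        + |Real.sin (v 0) * ((Real.sin (u 1) - Real.sin (v 1)) * Real.sin (u 2))|
        + |(Real.sin (v 0) * Real.sin (v 1)) * (Real.sin (u 2) - Real.sin (v 2))| :=
          (abs_add_three _ _ _)
    _ ≤ |u 0 - v 0| + |u 1 - v 1| + |u 2 - v 2| := by
        have b01 : |Real.sin (u 1) * Real.sin (u 2)| ≤ 1 := by
          rw [abs_mul]; exact mul_le_one₀ (hs _) (abs_nonneg _) (hs _)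
        have b02 : |Real.sin (v 0) * Real.sin (v 1)| ≤ 1 := by
          rw [abs_mul]; exact mul_le_one₀ (hs _) (abs_nonneg _) (hs _)
        have t0 : |(Real.sin (u 0) - Real.sin (v 0)) * (Real.sin (u 1) * Real.sin (u 2))|
            ≤ |u 0 - v 0| := by
          rw [abs_mul]
          calc |Real.sin (u 0) - Real.sin (v 0)| * |Real.sin (u 1) * Real.sin (u 2)|
              ≤ |u 0 - v 0| * 1 := mul_le_mul h0 b01 (abs_nonneg _) (abs_nonneg _)
            _ = |u 0 - v 0| := mul_one _
        have t1 : |Real.sin (v 0) * ((Real.sin (u 1) - Real.sin (v 1)) * Real.sin (u 2))|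
            ≤ |u 1 - v 1| := by
          rw [abs_mul, abs_mul]
          calc |Real.sin (v 0)| * (|Real.sin (u 1) - Real.sin (v 1)| * |Real.sin (u 2)|)
              ≤ 1 * (|u 1 - v 1| * 1) := by
                refine mul_le_mul (hs _) ?_ (by positivity) (by norm_num)
                exact mul_le_mul h1 (hs _) (abs_nonneg _) (abs_nonneg _)
            _ = |u 1 - v 1| := by ring
        have t2 : |(Real.sin (v 0) * Real.sin (v 1)) * (Real.sin (u 2) - Real.sin (v 2))|
            ≤ |u 2 - v 2| := by
          rw [abs_mul]
          calc |Real.sin (v 0) * Real.sin (v 1)| * |Real.sin (u 2) - Real.sin (v 2)|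
              ≤ 1 * |u 2 - v 2| := mul_le_mul b02 h2 (abs_nonneg _) (by norm_num)
            _ = |u 2 - v 2| := one_mul _
        linarith

lemma mu_bound {n : ℕ} (hn : 1 ≤ n) (p : Fin n → (Fin 3 → ℕ))
    (hinj : Function.Injective p)
    (hmin : ∀ i, ∀ m' : Fin 3 → ℕ, (∀ a, 1 ≤ m' a) → (∀ j, p j ≠ m') →
      (∑ a, (p i a) ^ 2) ≤ ∑ a, (m' a) ^ 2) (i : Fin n) :
    ((∑ a, (p i a) ^ 2 : ℕ) : ℝ) ≤ 12 * (n : ℝ) ^ ((2:ℝ)/3) := by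
  by_contra hcon
  push_neg at hcon
  set μ : ℕ := ∑ a, (p i a) ^ 2 with hμ
  set t : ℝ := (n : ℝ) ^ ((1:ℝ)/3) with ht
  have hn1 : (1:ℝ) ≤ (n:ℝ) := by exact_mod_cast hn
  have ht1 : 1 ≤ t := Real.one_le_rpow hn1 (by norm_num)
  have ht0 : 0 ≤ t := by linarith
  set k : ℕ := ⌊t⌋₊ + 1 with hk
  have hkt : t < (k : ℝ) := by
    have := Nat.lt_floor_add_one t
    push_cast [hk]
    linarith
  have hkle : (k : ℝ) ≤ 2 * t := by
    have := Nat.floor_le ht0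
    push_cast [hk]
    linarith
  have ht3 : t ^ (3:ℕ) = (n : ℝ) := by
    rw [← Real.rpow_natCast t 3, ht, ← Real.rpow_mul (by positivity)]
    norm_num
  have ht2 : t ^ (2:ℕ) = (n : ℝ) ^ ((2:ℝ)/3) := by
    rw [← Real.rpow_natCast t 2, ht, ← Real.rpow_mul (by positivity)]
    norm_num
  -- n < k^3
  have hnk3 : (n : ℝ) < (k : ℝ) ^ 3 := by
    rw [← ht3]
    exact pow_lt_pow_left₀ hkt ht0 (by norm_num)
  -- 3 k^2 < μ
  have h3k2 : 3 * (k : ℝ) ^ 2 < (μ : ℝ) := by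
    have h1 : 3 * (k:ℝ)^2 ≤ 12 * t ^ 2 := by nlinarith
    rw [ht2] at h1
    linarith
  have h3k2' : 3 * k ^ 2 < μ := by exact_mod_cast h3k2
  -- every m in Icc 1 (const k) is in the range of p
  have hsub : (Finset.Icc (fun _ => 1 : Fin 3 → ℕ) (fun _ => k))
      ⊆ Finset.image p Finset.univ := by
    intro m hm
    rw [Finset.mem_Icc] at hm
    obtain ⟨hm1, hm2⟩ := hm
    by_contra hnot
    rw [Finset.mem_image] at hnot
    simp only [Finset.mem_univ, true_and] at hnot
    have hle := hmin i m (fun a => hm1 a) (fun j hj => hnot ⟨j, hj⟩)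
    have hsum : ∑ a, (m a) ^ 2 ≤ 3 * k ^ 2 := by
      calc ∑ a, (m a) ^ 2 ≤ ∑ _a : Fin 3, k ^ 2 :=
            Finset.sum_le_sum fun a _ => Nat.pow_le_pow_left (hm2 a) 2
        _ = 3 * k ^ 2 := by simp [Finset.sum_const, mul_comm]
    omega
  have hcard : k ^ 3 ≤ n := by
    have h1 : (Finset.Icc (fun _ => 1 : Fin 3 → ℕ) (fun _ => k)).card = k ^ 3 := by
      rw [Pi.card_Icc]
      simp [Nat.card_Icc]
    calc k ^ 3 = _ := h1.symm
      _ ≤ (Finset.image p Finset.univ).card := Finset.card_le_card hsub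
      _ ≤ (Finset.univ : Finset (Fin n)).card := Finset.card_image_le
      _ = n := Finset.card_univ.trans (Fintype.card_fin n)
  have : (k:ℝ)^3 ≤ (n:ℝ) := by exact_mod_cast hcard
  linarith

theorem two_particle_density_quadratic_bound :
    ∃ C : ℝ, 0 < C ∧
      ∀ (ℓ : ℝ) (n : ℕ) (p : Fin n → (Fin 3 → ℕ)),
        0 < ℓ → 1 ≤ n →
        Function.Injective p →
        (∀ i a, 1 ≤ p i a) →
        (∀ i, ∀ m' : Fin 3 → ℕ, (∀ a, 1 ≤ m' a) → (∀ j, p j ≠ m') →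
          (∑ a, (p i a) ^ 2) ≤ ∑ a, (m' a) ^ 2) →
        ∀ x x' : E3, (∀ a, 0 ≤ x a ∧ x a ≤ ℓ) → (∀ a, 0 ≤ x' a ∧ x' a ≤ ℓ) →
          (∑ i, (sineEig ℓ (p i) x) ^ 2) * (∑ i, (sineEig ℓ (p i) x') ^ 2)
              - (∑ i, sineEig ℓ (p i) x * sineEig ℓ (p i) x') ^ 2
            ≤ C * ‖x - x'‖ ^ 2 * ((n : ℝ) / ℓ ^ 3) ^ ((8:ℝ)/3) := by
  refine ⟨1536 * π ^ 2, by positivity, ?_⟩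
  intro ℓ n p hℓ hn hinj hpos hmin x x' hx hx'
  have hℓ0 : (0:ℝ) < ℓ := hℓ
  have hℓne : ℓ ≠ 0 := ne_of_gt hℓ
  set c : ℝ := (2 / ℓ) ^ ((3:ℝ)/2) with hc
  have h2ℓ : (0:ℝ) ≤ 2 / ℓ := by positivity
  have hc0 : 0 ≤ c := Real.rpow_nonneg h2ℓ _
  have hc2 : c ^ 2 = 8 / ℓ ^ 3 := by
    have e1 : c ^ (2:ℕ) = (2/ℓ) ^ ((3:ℝ)) := by
      rw [hc, ← Real.rpow_natCast (((2:ℝ)/ℓ) ^ ((3:ℝ)/2)) 2, ← Real.rpow_mul h2ℓ]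
      norm_num
    rw [e1, show ((3:ℝ)) = ((3:ℕ):ℝ) by norm_num, Real.rpow_natCast]
    field_simp; ring
  set a : Fin n → ℝ := fun i => sineEig ℓ (p i) x with ha
  set b : Fin n → ℝ := fun i => sineEig ℓ (p i) x' with hb
  set d : Fin n → ℝ := fun i => a i - b i with hd
  set Δ : Fin 3 → ℝ := fun t => x t - x' t with hΔ
  set D2 : ℝ := ∑ t, (Δ t) ^ 2 with hD2
  have hD2nn : 0 ≤ D2 := Finset.sum_nonneg fun _ _ => sq_nonneg _
  have hnorm : ‖x - x'‖ ^ 2 = D2 := by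
    rw [EuclideanSpace.norm_eq, Real.sq_sqrt (by positivity)]
    refine Finset.sum_congr rfl fun t _ => ?_
    simp [hΔ, Real.norm_eq_abs, sq_abs]
  -- bound on |b i|
  have habs_prod : ∀ (v : Fin 3 → ℝ), |∏ t, Real.sin (v t)| ≤ 1 := by
    intro v
    rw [Finset.abs_prod]
    exact Finset.prod_le_one (fun t _ => abs_nonneg _) (fun t _ => Real.abs_sin_le_one _)
  have hb2 : ∀ i, (b i) ^ 2 ≤ c ^ 2 := by
    intro i
    have : |b i| ≤ c := by
      rw [hb]
      simp only [sineEig]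
      rw [abs_mul, abs_of_nonneg hc0]
      calc c * |∏ t, Real.sin (π * (p i t : ℝ) / ℓ * x' t)| ≤ c * 1 := by
            exact mul_le_mul_of_nonneg_left (habs_prod _) hc0
        _ = c := mul_one c
    calc (b i)^2 = |b i|^2 := (sq_abs _).symm
      _ ≤ c^2 := pow_le_pow_left₀ (abs_nonneg _) this 2
  -- bound on |d i|
  have hdbound : ∀ i, |d i| ≤ c * ((π/ℓ) * ∑ t, (p i t : ℝ) * |Δ t|) := by
    intro i
    have : d i = c * ((∏ t, Real.sin (π * (p i t : ℝ) / ℓ * x t))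
        - ∏ t, Real.sin (π * (p i t : ℝ) / ℓ * x' t)) := by
      rw [hd]; simp only [ha, hb, sineEig]; ring
    rw [this, abs_mul, abs_of_nonneg hc0]
    refine mul_le_mul_of_nonneg_left ?_ hc0
    calc |∏ t, Real.sin (π * (p i t : ℝ) / ℓ * x t) - ∏ t, Real.sin (π * (p i t : ℝ) / ℓ * x' t)|
        ≤ ∑ t, |π * (p i t : ℝ) / ℓ * x t - π * (p i t : ℝ) / ℓ * x' t| := prod_sin_diff _ _
      _ = (π/ℓ) * ∑ t, (p i t : ℝ) * |Δ t| := by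
          rw [Finset.mul_sum]
          refine Finset.sum_congr rfl fun t _ => ?_
          rw [← mul_sub, abs_mul]
          have : |π * (p i t : ℝ) / ℓ| = π * (p i t : ℝ) / ℓ := abs_of_nonneg (by positivity)
          rw [this, hΔ]
          ring
  -- square bound on d i
  have hM : ∀ i, (∑ t, ((p i t : ℝ))^2) ≤ 12 * (n : ℝ) ^ ((2:ℝ)/3) := by
    intro i
    have := mu_bound hn p hinj hmin i
    push_cast at this
    exact this
  have hd2 : ∀ i, (d i)^2 ≤ c^2 * ((π/ℓ)^2 * ((12 * (n:ℝ) ^ ((2:ℝ)/3)) * D2)) := by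
    intro i
    have hS0 : 0 ≤ (π/ℓ) * ∑ t, (p i t : ℝ) * |Δ t| := by positivity
    have h1 : (d i)^2 ≤ (c * ((π/ℓ) * ∑ t, (p i t : ℝ) * |Δ t|))^2 := by
      calc (d i)^2 = |d i|^2 := (sq_abs _).symm
        _ ≤ _ := pow_le_pow_left₀ (abs_nonneg _) (hdbound i) 2
    have hCS : (∑ t, (p i t : ℝ) * |Δ t|)^2 ≤ (∑ t, ((p i t:ℝ))^2) * D2 := by
      have := Finset.sum_mul_sq_le_sq_mul_sq Finset.univ (fun t => (p i t : ℝ)) (fun t => |Δ t|)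
      calc (∑ t, (p i t : ℝ) * |Δ t|)^2 ≤ (∑ t, ((p i t:ℝ))^2) * ∑ t, |Δ t|^2 := this
        _ = (∑ t, ((p i t:ℝ))^2) * D2 := by
            rw [hD2]
            congr 1
            exact Finset.sum_congr rfl fun t _ => sq_abs _
    calc (d i)^2 ≤ (c * ((π/ℓ) * ∑ t, (p i t : ℝ) * |Δ t|))^2 := h1
      _ = c^2 * ((π/ℓ)^2 * (∑ t, (p i t : ℝ) * |Δ t|)^2) := by ring
      _ ≤ c^2 * ((π/ℓ)^2 * ((∑ t, ((p i t:ℝ))^2) * D2)) := by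
          refine mul_le_mul_of_nonneg_left (mul_le_mul_of_nonneg_left ?_ (by positivity)) (by positivity)
          exact hCS
      _ ≤ c^2 * ((π/ℓ)^2 * ((12 * (n:ℝ) ^ ((2:ℝ)/3)) * D2)) := by
          refine mul_le_mul_of_nonneg_left (mul_le_mul_of_nonneg_left ?_ (by positivity)) (by positivity)
          exact mul_le_mul_of_nonneg_right (hM i) hD2nn
  -- step 1: Lagrange + antisymmetric bound
  have key : ∀ i j, (a i * b j - a j * b i)^2 ≤ 2*c^2*(d i)^2 + 2*c^2*(d j)^2 := by
    intro i j
    have e : a i * b j - a j * b i = d i * b j - d j * b i := by rw [hd]; ring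
    rw [e]
    nlinarith [sq_nonneg (d i * b j + d j * b i),
      mul_nonneg (sq_nonneg (d i)) (sub_nonneg.2 (hb2 j)),
      mul_nonneg (sq_nonneg (d j)) (sub_nonneg.2 (hb2 i))]
  have hdoublesum : ∑ i, ∑ j, (a i * b j - a j * b i)^2 ≤ 4*c^2*(n:ℝ)*∑ i, (d i)^2 := by
    calc ∑ i, ∑ j, (a i * b j - a j * b i)^2
        ≤ ∑ i : Fin n, ∑ j : Fin n, (2*c^2*(d i)^2 + 2*c^2*(d j)^2) :=
          Finset.sum_le_sum fun i _ => Finset.sum_le_sum fun j _ => key i j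
      _ = 4*c^2*(n:ℝ)*∑ i, (d i)^2 := by
          simp only [Finset.sum_add_distrib, Finset.sum_const, Finset.card_univ,
            Fintype.card_fin, nsmul_eq_mul]
          have e1 : (∑ i : Fin n, (n:ℝ) * (2*c^2*(d i)^2)) = (n:ℝ)*2*c^2*∑ i, (d i)^2 := by
            rw [Finset.mul_sum]
            try exact Finset.sum_congr rfl fun i _ => by ring
          have e2 : (∑ j : Fin n, 2*c^2*(d j)^2) = 2*c^2*∑ j, (d j)^2 := by
            rw [Finset.mul_sum]
            try exact Finset.sum_congr rfl fun j _ => by ring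
          rw [e1, e2]
          ring
  have hsumd : ∑ i, (d i)^2 ≤ (n:ℝ) * (c^2 * ((π/ℓ)^2 * ((12 * (n:ℝ) ^ ((2:ℝ)/3)) * D2))) := by
    calc ∑ i, (d i)^2 ≤ ∑ _i : Fin n, c^2 * ((π/ℓ)^2 * ((12 * (n:ℝ) ^ ((2:ℝ)/3)) * D2)) :=
          Finset.sum_le_sum fun i _ => hd2 i
      _ = _ := by rw [Finset.sum_const, Finset.card_univ, Fintype.card_fin, nsmul_eq_mul]
  have hn0 : (0:ℝ) < (n:ℝ) := by exact_mod_cast Nat.lt_of_lt_of_le Nat.zero_lt_one hn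
  -- exponent bookkeeping
  have hpow : (n:ℝ)^(2:ℕ) * (n:ℝ)^((2:ℝ)/3) = (n:ℝ)^((8:ℝ)/3) := by
    rw [← Real.rpow_natCast (n:ℝ) 2, ← Real.rpow_add hn0]
    norm_num
  have hrpow : ((n:ℝ)/ℓ^3) ^ ((8:ℝ)/3) = (n:ℝ)^((8:ℝ)/3) / ℓ^(8:ℕ) := by
    rw [Real.div_rpow (le_of_lt hn0) (by positivity)]
    congr 1
    rw [← Real.rpow_natCast ℓ 3, ← Real.rpow_mul (le_of_lt hℓ0), ← Real.rpow_natCast ℓ 8]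
    norm_num
  -- assemble
  have hmain := lagrange_id a b
  rw [hmain]
  have hfinal : (1/2) * (4*c^2*(n:ℝ)*((n:ℝ) * (c^2 * ((π/ℓ)^2 * ((12 * (n:ℝ) ^ ((2:ℝ)/3)) * D2)))))
      = 1536 * π^2 * ‖x - x'‖^2 * (((n:ℝ)/ℓ^3) ^ ((8:ℝ)/3)) := by
    rw [hnorm, hrpow, hc2, ← hpow]
    field_simp
    ring
  calc (1/2) * ∑ i, ∑ j, (a i * b j - a j * b i)^2
      ≤ (1/2) * (4*c^2*(n:ℝ)*∑ i, (d i)^2) := by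
        refine mul_le_mul_of_nonneg_left hdoublesum (by norm_num)
    _ ≤ (1/2) * (4*c^2*(n:ℝ)*((n:ℝ) * (c^2 * ((π/ℓ)^2 * ((12 * (n:ℝ) ^ ((2:ℝ)/3)) * D2))))) := by
        refine mul_le_mul_of_nonneg_left (mul_le_mul_of_nonneg_left hsumd (by positivity)) (by norm_num)
    _ = 1536 * π^2 * ‖x - x'‖^2 * (((n:ℝ)/ℓ^3) ^ ((8:ℝ)/3)) := hfinal
end
end

section
/- There exists a universal constant C with the following property. Let ℓ > 0, n ≥ 1, and let P ⊂ (π/ℓ)·{1,2,3,…}³ with |P| = n be such that |p| ≤ |q| for every p ∈ P and every q ∈ (π/ℓ)·{1,2,3,…}³ ∖ P. For p ∈ P let φ_p(x) = (2/ℓ)^{3/2} ∏_{a=1}^3 sin(p_a x_a) on [0,ℓ]³, and let ρ(x) = Σ_{p∈P} φ_p(x)². Then ∫_{[0,ℓ]³} ρ(x)² dx = ℓ^{−3} Σ_{p,q∈P} ∏_{a=1}^3 ( 1 + (1/2) δ_{p_a,q_a} ), and consequently ∫_{[0,ℓ]³} ρ(x)² dx ≤ (n²/ℓ³) ( 1 +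 C n^{−1/3} ). -/
/-!
Expanding the square, `∫ ρ²` is a sum over pairs `(p, q)` of integrals of products over the three
coordinates of `sin² (p_a x) sin² (q_a x)`. Each such one-dimensional integral is a combination of
integrals of `cos (2πk x / ℓ)` over a period, which vanish unless `k = 0`; only `k = p_a - q_a`
can vanish, which produces the factor `1 + δ/2`.

For the bound, `∏ₐ (1 + δₐ/2) ≤ 1 + Σₐ δₐ`, so the excess over `n²` is controlled by the number of
pairs sharing a coordinate. Some mode in the cube `{1, …, M}³` with `M³ ≈ n` is not occupied, so
the lowest-mode condition gives `|p|² ≤ 3M²` and all coordinates of occupied modes are at most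
`2M`. Hence a coordinate value is shared by at most `(2M)² = O(n^{2/3})` occupied modes, and the
excess is `O(n^{5/3})`.
-/

noncomputable section

open MeasureTheory Real
open scoped BigOperators

theorem EuclideanSpace.setIntegral_box_prod {ι : Type*} [Fintype ι] (s : ι → Set ℝ)
    (f : ι → ℝ → ℝ) :
    ∫ x in {x : EuclideanSpace ℝ ι | ∀ a, x a ∈ s a}, ∏ a, f a (x a)
      = ∏ a, ∫ t in s a, f a t := by
  rw [← (PiLp.volume_preserving_toLp ι).setIntegral_preimage_emb
    (MeasurableEquiv.toLp 2 (ι → ℝ)).measurableEmbedding]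
  have hpre : WithLp.toLp 2 ⁻¹' {x : EuclideanSpace ℝ ι | ∀ a, x a ∈ s a} = Set.univ.pi s := by
    ext x
    simp
  rw [hpre, volume_pi, Measure.restrict_pi_pi]
  exact integral_fintype_prod_eq_prod _

theorem EuclideanSpace.isCompact_box {ι : Type*} [Fintype ι] {s : ι → Set ℝ}
    (hs : ∀ a, IsCompact (s a)) : IsCompact {x : EuclideanSpace ℝ ι | ∀ a, x a ∈ s a} := by
  convert (PiLp.homeomorph 2 fun _ : ι => ℝ).isCompact_preimage.mpr (isCompact_univ_pi hs)
  ext x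
  simp [PiLp.homeomorph]

theorem sin_sq_mul_sin_sq (A B : ℝ) :
    sin A ^ 2 * sin B ^ 2 =
      1 / 4 - cos (2 * A) / 4 - cos (2 * B) / 4 + cos (2 * A - 2 * B) / 8
        + cos (2 * A + 2 * B) / 8 := by
  rw [cos_sub, cos_add, cos_two_mul, cos_two_mul, sin_two_mul, sin_two_mul, cos_sq' A, cos_sq' B]
  ring

theorem integral_cos_two_pi_int_mul {ℓ : ℝ} (hℓ : ℓ ≠ 0) (k : ℤ) :
    ∫ x in (0 : ℝ)..ℓ, cos (2 * π * k / ℓ * x) = if k = 0 then ℓ else 0 := by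
  split_ifs with hk
  · simp [hk]
  · have hc : 2 * π * k / ℓ ≠ 0 := by positivity
    rw [intervalIntegral.integral_comp_mul_left cos hc, integral_cos,
      div_mul_cancel₀ _ hℓ, show 2 * π * (k : ℝ) = (2 * k : ℤ) * π by push_cast; ring,
      sin_int_mul_pi]
    simp

theorem integral_sin_sq_mul_sin_sq {ℓ : ℝ} (hℓ : 0 < ℓ) {m m' : ℕ} (hm : m ≠ 0) (hm' : m' ≠ 0) :
    ∫ x in Set.Icc 0 ℓ, sin (π * m / ℓ * x) ^ 2 * sin (π * m' / ℓ * x) ^ 2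
      = ℓ / 4 * (1 + if m = m' then 1 / 2 else 0) := by
  set k : Fin 5 → ℤ := ![0, m, m', m - m', m + m']
  set c : Fin 5 → ℝ := ![1 / 4, -1 / 4, -1 / 4, 1 / 8, 1 / 8]
  have expand : ∀ x, sin (π * m / ℓ * x) ^ 2 * sin (π * m' / ℓ * x) ^ 2
      = ∑ r, c r * cos (2 * π * k r / ℓ * x) := by
    intro x
    rw [sin_sq_mul_sin_sq]
    simp only [Fin.sum_univ_five, c, k, Matrix.cons_val_zero, Matrix.cons_val_one, Matrix.cons_val,
      Int.cast_zero, Int.cast_natCast, Int.cast_sub, Int.cast_add, mul_zero, zero_div, zero_mul,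
      cos_zero]
    ring_nf
  rw [integral_Icc_eq_integral_Ioc, ← intervalIntegral.integral_of_le hℓ.le]
  simp_rw [expand]
  rw [intervalIntegral.integral_finsetSum fun r _ => by
    exact (continuous_const.mul (by fun_prop)).intervalIntegrable _ _]
  simp only [intervalIntegral.integral_const_mul, integral_cos_two_pi_int_mul hℓ.ne']
  have hsum : (m : ℤ) + m' ≠ 0 := by omega
  split_ifs with h <;> simp [c, k, Fin.sum_univ_five, hm, hm', hsum, h, sub_eq_zero] <;> ring

theorem sineEig_sq {ℓ : ℝ} (hℓ : 0 < ℓ) (m : Fin 3 → ℕ) (x : E3) :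
    sineEig ℓ m x ^ 2 = (2 / ℓ) ^ 3 * ∏ a, sin (π * m a / ℓ * x a) ^ 2 := by
  rw [sineEig, mul_pow, Finset.prod_pow, ← rpow_natCast, ← rpow_mul (by positivity)]
  norm_num

theorem sum_sineEig_sq_sq {ι : Type*} [Fintype ι] {ℓ : ℝ} (hℓ : 0 < ℓ) (p : ι → Fin 3 → ℕ)
    (x : E3) :
    (∑ i, sineEig ℓ (p i) x ^ 2) ^ 2
      = ∑ i, ∑ j, (2 / ℓ) ^ 6 *
          ∏ a, (sin (π * p i a / ℓ * x a) ^ 2 * sin (π * p j a / ℓ * x a) ^ 2) := by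
  simp_rw [sineEig_sq hℓ, sq (Finset.sum _ _), Finset.sum_mul_sum, Finset.prod_mul_distrib]
  ring_nf

theorem integral_sum_sineEig_sq_sq {ι : Type*} [Fintype ι] {ℓ : ℝ} (hℓ : 0 < ℓ)
    (p : ι → Fin 3 → ℕ) (hp : ∀ i a, p i a ≠ 0) :
    ∫ x in {x : E3 | ∀ a, 0 ≤ x a ∧ x a ≤ ℓ}, (∑ i, sineEig ℓ (p i) x ^ 2) ^ 2
      = ℓ ^ (-(3:ℤ)) * ∑ i, ∑ j, ∏ a : Fin 3, (1 + if p i a = p j a then (1:ℝ)/2 else 0) := by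
  have hcube : IsCompact {x : E3 | ∀ a, 0 ≤ x a ∧ x a ≤ ℓ} :=
    EuclideanSpace.isCompact_box fun _ => isCompact_Icc
  have hint : ∀ i j, IntegrableOn (fun x : E3 =>
      ∏ a, (sin (π * p i a / ℓ * x a) ^ 2 * sin (π * p j a / ℓ * x a) ^ 2))
      {x : E3 | ∀ a, 0 ≤ x a ∧ x a ≤ ℓ} := fun i j =>
    (Continuous.continuousOn (by fun_prop)).integrableOn_compact hcube
  have hfactor : ∀ i j, ∫ x in {x : E3 | ∀ a, 0 ≤ x a ∧ x a ≤ ℓ},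
      ∏ a, (sin (π * p i a / ℓ * x a) ^ 2 * sin (π * p j a / ℓ * x a) ^ 2)
      = (ℓ / 4) ^ 3 * ∏ a : Fin 3, (1 + if p i a = p j a then (1:ℝ)/2 else 0) := fun i j => by
    refine (EuclideanSpace.setIntegral_box_prod (fun _ => Set.Icc 0 ℓ)
        (fun a t => sin (π * p i a / ℓ * t) ^ 2 * sin (π * p j a / ℓ * t) ^ 2)).trans ?_
    simp only [integral_sin_sq_mul_sin_sq hℓ (hp i _) (hp j _), Finset.prod_mul_distrib,
      Finset.prod_const, Finset.card_univ, Fintype.card_fin]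
  have hconst : (2 / ℓ) ^ 6 * (ℓ / 4) ^ 3 = ℓ ^ (-(3:ℤ)) := by
    rw [zpow_neg, zpow_ofNat]
    field_simp
    norm_num
  simp_rw [sum_sineEig_sq_sq hℓ]
  rw [integral_finsetSum _ fun i _ => integrable_finsetSum _ fun j _ => (hint i j).const_mul _]
  simp_rw [integral_finsetSum _ fun j _ => (hint _ j).const_mul _, integral_const_mul, hfactor,
    ← mul_assoc, hconst, ← Finset.mul_sum]

open Finset

theorem Nat.exists_lt_pow_le_two_pow_mul {n d : ℕ} (hn : 1 ≤ n) (hd : d ≠ 0) :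
    ∃ M : ℕ, n < M ^ d ∧ M ^ d ≤ 2 ^ d * n := by
  have hex : ∃ M : ℕ, n < M ^ d := ⟨n + 1, (Nat.lt_succ_self n).trans_le (Nat.le_self_pow hd _)⟩
  set M := Nat.find hex
  have hnM : n < M ^ d := Nat.find_spec hex
  refine ⟨M, hnM, ?_⟩
  have hM : 2 ≤ M := by
    by_contra! h
    have : M ^ d ≤ 1 ^ d := Nat.pow_le_pow_left (by omega) d
    rw [one_pow] at this
    omega
  have hprev : (M - 1) ^ d ≤ n := not_lt.mp (Nat.find_min hex (by omega))
  calc M ^ d ≤ (2 * (M - 1)) ^ d := Nat.pow_le_pow_left (by omega) d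
    _ = 2 ^ d * (M - 1) ^ d := mul_pow 2 (M - 1) d
    _ ≤ 2 ^ d * n := Nat.mul_le_mul_left _ hprev

theorem exists_mem_cube_notMem_range {ι : Type*} [Fintype ι] {d M : ℕ} (p : ι → Fin d → ℕ)
    (hM : Fintype.card ι < M ^ d) : ∃ m : Fin d → ℕ, (∀ a, m a ∈ Icc 1 M) ∧ m ∉ Set.range p := by
  have hcube : ¬ Fintype.piFinset (fun _ : Fin d => Icc 1 M) ⊆ univ.image p := by
    intro h
    have := (card_le_card h).trans card_image_le
    simp only [Fintype.card_piFinset, Nat.card_Icc, add_tsub_cancel_right, prod_const, card_univ,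
      Fintype.card_fin] at this
    omega
  obtain ⟨m, hm, hmp⟩ := not_subset.mp hcube
  exact ⟨m, Fintype.mem_piFinset.mp hm, by simpa using hmp⟩

theorem coord_le_of_lowest {ι : Type*} [Fintype ι] (p : ι → Fin 3 → ℕ)
    (hmin : ∀ i, ∀ m' : Fin 3 → ℕ, (∀ a, 1 ≤ m' a) → (∀ j, p j ≠ m') →
      ∑ a, p i a ^ 2 ≤ ∑ a, m' a ^ 2)
    {M : ℕ} (hM : Fintype.card ι < M ^ 3) (i : ι) (a : Fin 3) : p i a ≤ 2 * M := by
  obtain ⟨m, hm, hmp⟩ := exists_mem_cube_notMem_range p hM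
  have hsum : ∑ b, p i b ^ 2 ≤ 3 * M ^ 2 :=
    calc ∑ b, p i b ^ 2 ≤ ∑ b, m b ^ 2 :=
          hmin i m (fun b => (mem_Icc.mp (hm b)).1) fun j hj => hmp ⟨j, hj⟩
      _ ≤ ∑ _b : Fin 3, M ^ 2 := sum_le_sum fun b _ => Nat.pow_le_pow_left (mem_Icc.mp (hm b)).2 2
      _ = 3 * M ^ 2 := by simp
  have hsingle : p i a ^ 2 ≤ ∑ b, p i b ^ 2 :=
    single_le_sum (f := fun b => p i b ^ 2) (fun _ _ => Nat.zero_le _) (mem_univ a)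
  nlinarith

theorem card_filter_coord_eq_le {ι : Type*} [Fintype ι] (p : ι → Fin 3 → ℕ)
    (hinj : Function.Injective p) {K : ℕ} (hK : ∀ i a, p i a ∈ Icc 1 K) (a : Fin 3) (v : ℕ) :
    #{j | p j a = v} ≤ K ^ 2 := by
  let box : Finset (Fin 3 → ℕ) := Fintype.piFinset fun b => if b = a then {v} else Icc 1 K
  have hmaps : ∀ j ∈ ({j | p j a = v} : Finset ι), p j ∈ box := by
    intro j hj
    simp only [box, Fintype.mem_piFinset]
    intro b
    split_ifs with hb
    · simpa [hb] using hj
    · exact hK j b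
  calc #{j | p j a = v} ≤ #box := card_le_card_of_injOn p hmaps hinj.injOn
    _ = K ^ 2 := by
      simp only [box, Fintype.card_piFinset, Fin.prod_univ_three]
      fin_cases a <;> simp [Nat.card_Icc, sq]

theorem prod_one_add_le_one_add_two_mul_sum (e : Fin 3 → ℝ) (he : ∀ a, 0 ≤ e a ∧ e a ≤ 1 / 2) :
    ∏ a, (1 + e a) ≤ 1 + 2 * ∑ a, e a := by
  obtain ⟨h0, h0'⟩ := he 0
  obtain ⟨h1, h1'⟩ := he 1
  obtain ⟨h2, h2'⟩ := he 2
  rw [Fin.prod_univ_three, Fin.sum_univ_three]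
  nlinarith [mul_nonneg h0 h1, mul_nonneg (mul_nonneg h0 h1) h2, mul_le_mul_of_nonneg_left h1' h0,
    mul_le_mul_of_nonneg_left h2' h1, mul_le_mul_of_nonneg_left h0' h2]

theorem sum_prod_one_add_half_le {ι α : Type*} [Fintype ι] [DecidableEq α] (q : ι → Fin 3 → α)
    {N : ℕ} (hN : ∀ a v, #{j | q j a = v} ≤ N) :
    ∑ i, ∑ j, ∏ a : Fin 3, (1 + if q i a = q j a then (1:ℝ)/2 else 0)
      ≤ Fintype.card ι ^ 2 + 3 * Fintype.card ι * N := by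
  have hfiber : ∀ i a, ∑ j, (if q i a = q j a then (1:ℝ)/2 else 0) ≤ N / 2 := by
    intro i a
    rw [← sum_filter, sum_const, nsmul_eq_mul]
    have : (#{j | q i a = q j a} : ℝ) ≤ N := by
      simp_rw [eq_comm (a := q i a)]
      exact_mod_cast hN a (q i a)
    linarith
  have hrow : ∀ i, ∑ j, ∏ a : Fin 3, (1 + if q i a = q j a then (1:ℝ)/2 else 0)
      ≤ Fintype.card ι + 3 * N := fun i =>
    calc ∑ j, ∏ a : Fin 3, (1 + if q i a = q j a then (1:ℝ)/2 else 0)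
        ≤ ∑ j, (1 + 2 * ∑ a, if q i a = q j a then (1:ℝ)/2 else 0) := by
          gcongr with j _
          exact prod_one_add_le_one_add_two_mul_sum _ fun a => by split_ifs <;> norm_num
      _ = Fintype.card ι + 2 * ∑ a, ∑ j, if q i a = q j a then (1:ℝ)/2 else 0 := by
          rw [sum_add_distrib, ← mul_sum, sum_comm]
          simp only [sum_const, card_univ, nsmul_eq_mul, mul_one]
      _ ≤ Fintype.card ι + 2 * ∑ _a : Fin 3, ((N : ℝ) / 2) := by
          gcongr with a _
          exact hfiber i a
      _ = Fintype.card ι + 3 * N := by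
          simp only [sum_const, card_univ, Fintype.card_fin, nsmul_eq_mul]
          ring
  calc _ ≤ ∑ _i : ι, ((Fintype.card ι : ℝ) + 3 * N) := sum_le_sum fun i _ => hrow i
    _ = _ := by
      simp only [sum_const, card_univ, nsmul_eq_mul]
      ring

theorem sq_add_mul_sq_le {n M : ℝ} (hn : 0 < n) (hM : 0 ≤ M) (hM3 : M ^ 3 ≤ 8 * n) :
    n ^ 2 + 3 * n * (2 * M) ^ 2 ≤ n ^ 2 * (1 + 48 * n ^ (-(1:ℝ)/3)) := by
  set t := n ^ (3⁻¹ : ℝ) with ht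
  have htpos : 0 < t := by positivity
  have hn_eq : n = t ^ 3 := (rpow_inv_natCast_pow hn.le three_ne_zero).symm
  have hneg : n ^ (-(1:ℝ)/3) = t⁻¹ := by rw [ht, ← rpow_neg hn.le]; norm_num
  have hMt : M ≤ 2 * t := by
    refine le_of_pow_le_pow_left₀ three_ne_zero (by positivity) ?_
    rw [mul_pow, ← hn_eq]; linarith
  rw [hneg, hn_eq]
  field_simp
  nlinarith [mul_le_mul hMt hMt hM (by positivity), pow_pos htpos 5]

theorem density_squared_integral :
    ∃ C : ℝ, ∀ (ℓ : ℝ) (n : ℕ) (p : Fin n → (Fin 3 → ℕ)),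
      0 < ℓ → 1 ≤ n →
      Function.Injective p →
      (∀ i a, 1 ≤ p i a) →
      (∀ i, ∀ m' : Fin 3 → ℕ, (∀ a, 1 ≤ m' a) → (∀ j, p j ≠ m') →
        (∑ a, (p i a) ^ 2) ≤ ∑ a, (m' a) ^ 2) →
      ((∫ x in {x : E3 | ∀ a, 0 ≤ x a ∧ x a ≤ ℓ},
            (∑ i, (sineEig ℓ (p i) x) ^ 2) ^ 2)
          = ℓ ^ (-(3:ℤ)) * ∑ i : Fin n, ∑ j : Fin n,
              ∏ a : Fin 3, (1 + if p i a = p j a then (1:ℝ)/2 else 0))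
      ∧ (∫ x in {x : E3 | ∀ a, 0 ≤ x a ∧ x a ≤ ℓ},
            (∑ i, (sineEig ℓ (p i) x) ^ 2) ^ 2)
          ≤ ((n : ℝ) ^ 2 / ℓ ^ 3) * (1 + C * (n : ℝ) ^ (-(1:ℝ)/3)) := by
  refine ⟨48, fun ℓ n p hℓ hn hinj hp1 hmin => ?_⟩
  rw [integral_sum_sineEig_sq_sq hℓ p fun i a => Nat.one_le_iff_ne_zero.mp (hp1 i a)]
  refine ⟨rfl, ?_⟩
  obtain ⟨M, hnM, hM8⟩ := Nat.exists_lt_pow_le_two_pow_mul hn three_ne_zero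
  have hcoord := coord_le_of_lowest p hmin (by simpa using hnM)
  have hS := sum_prod_one_add_half_le p
    (card_filter_coord_eq_le p hinj fun i a => mem_Icc.mpr ⟨hp1 i a, hcoord i a⟩)
  have hn' : (0 : ℝ) < n := by exact_mod_cast hn
  calc ℓ ^ (-(3:ℤ)) * ∑ i : Fin n, ∑ j : Fin n,
        ∏ a : Fin 3, (1 + if p i a = p j a then (1:ℝ)/2 else 0)
      ≤ ℓ ^ (-(3:ℤ)) * ((n : ℝ) ^ 2 + 3 * n * (2 * M) ^ 2) := by
        gcongr
        simpa using hS
    _ ≤ ℓ ^ (-(3:ℤ)) * ((n : ℝ) ^ 2 * (1 + 48 * (n : ℝ) ^ (-(1:ℝ)/3))) := by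
        gcongr
        exact sq_add_mul_sq_le hn' (Nat.cast_nonneg M) (by norm_num at hM8; exact_mod_cast hM8)
    _ = _ := by
        rw [zpow_neg, zpow_ofNat]
        ring
end
end

section
/- Let P, γ, W₊, W₋ be n×n complex Hermitian matrices such that P is an orthogonal projection (P² = P), 0 ≤ γ ≤ 1 (i.e. γ and 1 − γ are positive semidefinite), and W₊, W₋ are positive semidefinite. Set W = W₊ − W₋. Then for every δ > 0: Tr[γW] ≥ (1−δ) Tr[P W₊] − (1+δ) Tr[P W₋] − (1 + δ^{−1}) ( ‖W₊‖ + ‖W₋‖ ) Tr[γ(1−P)] − ‖W‖ Tr[P(1−γ)], where ‖·‖ denotes the operator norm and Tr the trace. -/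
noncomputable section

open scoped BigOperators ComplexOrder

/-- Operator (ℓ²) norm of a square complex matrix. -/
def matOpNorm {n : ℕ} (A : Matrix (Fin n) (Fin n) ℂ) : ℝ :=
  ‖Matrix.toEuclideanCLM (𝕜 := ℂ) A‖

/-!
Write `Q = 1 - P`. For `W ≥ 0` the form `X ↦ Tr[X W Xᴴ]` is the square of a seminorm on
matrices, and factoring `γ = Bᴴ B` gives `Tr[γ W] = ‖B P + B Q‖²`, while `‖B P‖² = Tr[P γ P W]`
and `‖B Q‖² = Tr[Q γ Q W]`. The elementary bounds
`(1 - δ) a² + (1 - δ⁻¹) b² ≤ ‖x + y‖² ≤ (1 + δ) a² + (1 + δ⁻¹) b²` for `a = ‖x‖`, `b = ‖y‖`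
thus bound `Tr[γ W₊]` from below and `Tr[γ W₋]` from above. It remains to write
`P γ P = P - P (1 - γ) P`, and to estimate `Tr[A W] ≤ ‖W‖ Tr[A]` for `A ≥ 0` with
`A = Q γ Q` (for each of `W₊`, `W₋`) and `A = P (1 - γ) P` (for `W = W₊ - W₋`).
-/

section PeterPaul

variable {E : Type*} [SeminormedAddCommGroup E] {δ : ℝ}

theorem norm_add_sq_le_add_mul_sq (x y : E) (hδ : 0 < δ) :
    ‖x + y‖ ^ 2 ≤ (1 + δ) * ‖x‖ ^ 2 + (1 + δ⁻¹) * ‖y‖ ^ 2 := by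
  have hxy : ‖x + y‖ ≤ ‖x‖ + ‖y‖ := norm_add_le x y
  nlinarith [two_mul_le_add_mul_sq (a := ‖x‖) (b := ‖y‖) hδ, norm_nonneg (x + y)]

theorem sub_mul_sq_le_norm_add_sq (x y : E) (hδ : 0 < δ) :
    (1 - δ) * ‖x‖ ^ 2 + (1 - δ⁻¹) * ‖y‖ ^ 2 ≤ ‖x + y‖ ^ 2 := by
  have hsq : (‖x‖ - ‖y‖) ^ 2 ≤ ‖x + y‖ ^ 2 := by
    refine sq_le_sq.mpr ?_
    simpa [abs_of_nonneg (norm_nonneg _)] using abs_norm_sub_norm_le x (-y)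
  nlinarith [two_mul_le_add_mul_sq (a := ‖x‖) (b := ‖y‖) hδ]

end PeterPaul

theorem IsIdempotentElem.mul_mul_eq_sub {R : Type*} [Ring R] {p : R} (hp : IsIdempotentElem p)
    (a : R) : p * a * p = p - p * (1 - a) * p := by
  rw [mul_sub, mul_one, sub_mul, hp.eq, sub_sub_cancel]

namespace Matrix

open RCLike
open scoped MatrixOrder

section RCLike

variable {ι 𝕜 : Type*} [Fintype ι] [RCLike 𝕜]

theorem PosSemidef.mul_mul_of_isHermitian {A P : Matrix ι ι 𝕜} (hA : A.PosSemidef)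
    (hP : P.IsHermitian) : (P * A * P).PosSemidef := by
  simpa only [hP.eq] using hA.mul_mul_conjTranspose_same P

theorem PosSemidef.re_trace_mul_nonneg {A B : Matrix ι ι 𝕜} (hA : A.PosSemidef)
    (hB : B.PosSemidef) : 0 ≤ re (A * B).trace := by
  classical
  obtain ⟨C, rfl⟩ := CStarAlgebra.nonneg_iff_eq_star_mul_self.mp hA.nonneg
  rw [star_eq_conjTranspose, Matrix.mul_assoc, trace_mul_comm]
  exact (RCLike.nonneg_iff.mp (hB.mul_mul_conjTranspose_same C).trace_nonneg).1

theorem trace_mul_mul_self_of_isIdempotentElem {Q : Matrix ι ι 𝕜} (hQ : IsIdempotentElem Q)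
    (A : Matrix ι ι 𝕜) : (Q * A * Q).trace = (Q * A).trace := by
  rw [trace_mul_comm, ← Matrix.mul_assoc, hQ.eq]

theorem trace_mul_mul_conjTranspose (Y X M : Matrix ι ι 𝕜) :
    (Y * X * M * (Y * X)ᴴ).trace = (Xᴴ * (Yᴴ * Y) * X * M).trace := by
  rw [conjTranspose_mul, trace_mul_comm]
  simp only [Matrix.mul_assoc]

theorem PosSemidef.re_trace_add_mul_conjTranspose_le {M : Matrix ι ι 𝕜} (hM : M.PosSemidef)
    (X Y : Matrix ι ι 𝕜) {δ : ℝ} (hδ : 0 < δ) :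
    re ((X + Y) * M * (X + Y)ᴴ).trace ≤
      (1 + δ) * re (X * M * Xᴴ).trace + (1 + δ⁻¹) * re (Y * M * Yᴴ).trace := by
  let _ := M.toMatrixSeminormedAddCommGroup hM
  let _ := M.toMatrixInnerProductSpace hM
  have hnorm (Z : Matrix ι ι 𝕜) : ‖Z‖ ^ 2 = re (Z * M * Zᴴ).trace := by
    rw [@norm_sq_eq_re_inner 𝕜]; rfl
  simpa only [hnorm] using norm_add_sq_le_add_mul_sq X Y hδ

theorem PosSemidef.le_re_trace_add_mul_conjTranspose {M : Matrix ι ι 𝕜} (hM : M.PosSemidef)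
    (X Y : Matrix ι ι 𝕜) {δ : ℝ} (hδ : 0 < δ) :
    (1 - δ) * re (X * M * Xᴴ).trace + (1 - δ⁻¹) * re (Y * M * Yᴴ).trace ≤
      re ((X + Y) * M * (X + Y)ᴴ).trace := by
  let _ := M.toMatrixSeminormedAddCommGroup hM
  let _ := M.toMatrixInnerProductSpace hM
  have hnorm (Z : Matrix ι ι 𝕜) : ‖Z‖ ^ 2 = re (Z * M * Zᴴ).trace := by
    rw [@norm_sq_eq_re_inner 𝕜]; rfl
  simpa only [hnorm] using sub_mul_sq_le_norm_add_sq X Y hδ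

variable [DecidableEq ι] {γ W P : Matrix ι ι 𝕜} {δ : ℝ}

theorem PosSemidef.pinching_le_re_trace_mul (hγ : γ.PosSemidef) (hW : W.PosSemidef)
    (hP : P.IsHermitian) (hδ : 0 < δ) :
    (1 - δ) * re (P * γ * P * W).trace + (1 - δ⁻¹) * re ((1 - P) * γ * (1 - P) * W).trace ≤
      re (γ * W).trace := by
  obtain ⟨B, rfl⟩ := CStarAlgebra.nonneg_iff_eq_star_mul_self.mp hγ.nonneg
  have h := hW.le_re_trace_add_mul_conjTranspose (B * P) (B * (1 - P)) hδ
  have hγW : (B * W * Bᴴ).trace = (Bᴴ * B * W).trace := by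
    rw [trace_mul_comm, Matrix.mul_assoc]
  rwa [← mul_add, add_sub_cancel, mul_one, trace_mul_mul_conjTranspose,
    trace_mul_mul_conjTranspose, hP.eq, (isHermitian_one.sub hP).eq, hγW,
    ← star_eq_conjTranspose] at h

theorem PosSemidef.re_trace_mul_le_pinching (hγ : γ.PosSemidef) (hW : W.PosSemidef)
    (hP : P.IsHermitian) (hδ : 0 < δ) :
    re (γ * W).trace ≤
      (1 + δ) * re (P * γ * P * W).trace + (1 + δ⁻¹) * re ((1 - P) * γ * (1 - P) * W).trace := by
  obtain ⟨B, rfl⟩ := CStarAlgebra.nonneg_iff_eq_star_mul_self.mp hγ.nonneg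
  have h := hW.re_trace_add_mul_conjTranspose_le (B * P) (B * (1 - P)) hδ
  have hγW : (B * W * Bᴴ).trace = (Bᴴ * B * W).trace := by
    rw [trace_mul_comm, Matrix.mul_assoc]
  rwa [← mul_add, add_sub_cancel, mul_one, trace_mul_mul_conjTranspose,
    trace_mul_mul_conjTranspose, hP.eq, (isHermitian_one.sub hP).eq, hγW,
    ← star_eq_conjTranspose] at h

end RCLike

variable {ι : Type*} [Fintype ι] [DecidableEq ι] {P γ W : Matrix ι ι ℂ} {δ : ℝ}

open scoped Norms.L2Operator

theorem PosSemidef.re_trace_mul_le_norm_mul {A : Matrix ι ι ℂ} (hA : A.PosSemidef)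
    (hW : W.IsHermitian) : (A * W).trace.re ≤ ‖W‖ * A.trace.re := by
  have hle : W ≤ algebraMap ℝ _ ‖W‖ := hW.isSelfAdjoint.le_algebraMap_norm_self
  have h := hA.re_trace_mul_nonneg (le_iff.mp hle)
  rw [Algebra.algebraMap_eq_smul_one, Matrix.mul_sub, trace_sub, Matrix.mul_smul, Matrix.mul_one,
    trace_smul] at h
  simp only [RCLike.re_to_complex, Complex.sub_re, Complex.real_smul, Complex.mul_re,
    Complex.ofReal_re, Complex.ofReal_im, zero_mul, sub_zero] at h
  linarith

theorem PosSemidef.re_trace_conj_mul_le_norm_mul (hγ : γ.PosSemidef) (hW : W.IsHermitian)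
    (hP : P.IsHermitian) (hPP : IsIdempotentElem P) :
    (P * γ * P * W).trace.re ≤ ‖W‖ * (γ * P).trace.re := by
  rw [trace_mul_comm γ, ← trace_mul_mul_self_of_isIdempotentElem hPP]
  exact (hγ.mul_mul_of_isHermitian hP).re_trace_mul_le_norm_mul hW

theorem PosSemidef.le_re_trace_mul_of_isIdempotentElem (hW : W.PosSemidef) (hP : P.IsHermitian)
    (hPP : IsIdempotentElem P) (hγ0 : γ.PosSemidef) (hγ1 : (1 - γ).PosSemidef) (hδ : 0 < δ) :
    (1 - δ) * (P * W).trace.re - (P * (1 - γ) * P * W).trace.re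
      - (1 + δ⁻¹) * ‖W‖ * (γ * (1 - P)).trace.re ≤ (γ * W).trace.re := by
  have hpin := hγ0.pinching_le_re_trace_mul hW hP hδ
  rw [hPP.mul_mul_eq_sub, Matrix.sub_mul, trace_sub, map_sub] at hpin
  have hD := (hγ1.mul_mul_of_isHermitian hP).re_trace_mul_nonneg hW
  have hC0 := (hγ0.mul_mul_of_isHermitian (isHermitian_one.sub hP)).re_trace_mul_nonneg hW
  have hC := hγ0.re_trace_conj_mul_le_norm_mul hW.1 (isHermitian_one.sub hP) hPP.one_sub
  simp only [RCLike.re_to_complex] at hpin hD hC0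
  nlinarith [mul_nonneg hδ.le hD, mul_le_mul_of_nonneg_left hC (inv_nonneg.2 hδ.le)]

theorem PosSemidef.re_trace_mul_le_of_isIdempotentElem (hW : W.PosSemidef) (hP : P.IsHermitian)
    (hPP : IsIdempotentElem P) (hγ0 : γ.PosSemidef) (hγ1 : (1 - γ).PosSemidef) (hδ : 0 < δ) :
    (γ * W).trace.re ≤ (1 + δ) * (P * W).trace.re - (P * (1 - γ) * P * W).trace.re
      + (1 + δ⁻¹) * ‖W‖ * (γ * (1 - P)).trace.re := by
  have hpin := hγ0.re_trace_mul_le_pinching hW hP hδ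
  rw [hPP.mul_mul_eq_sub, Matrix.sub_mul, trace_sub, map_sub] at hpin
  have hD := (hγ1.mul_mul_of_isHermitian hP).re_trace_mul_nonneg hW
  have hC := hγ0.re_trace_conj_mul_le_norm_mul hW.1 (isHermitian_one.sub hP) hPP.one_sub
  simp only [RCLike.re_to_complex] at hpin hD
  nlinarith [mul_nonneg hδ.le hD, mul_le_mul_of_nonneg_left hC (by positivity : 0 ≤ 1 + δ⁻¹)]

end Matrix

open scoped Matrix.Norms.L2Operator in
theorem matOpNorm_eq_norm {n : ℕ} (A : Matrix (Fin n) (Fin n) ℂ) : matOpNorm A = ‖A‖ := rfl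

open Matrix in
theorem trace_comparison_inequality
    (n : ℕ) (P γ Wp Wm : Matrix (Fin n) (Fin n) ℂ)
    (hP : P.IsHermitian) (hPproj : P * P = P)
    (hγ0 : γ.PosSemidef) (hγ1 : (1 - γ).PosSemidef)
    (hWp : Wp.PosSemidef) (hWm : Wm.PosSemidef)
    (δ : ℝ) (hδ : 0 < δ) :
    ((γ * (Wp - Wm)).trace).re ≥
      (1 - δ) * ((P * Wp).trace).re - (1 + δ) * ((P * Wm).trace).re
      - (1 + δ⁻¹) * (matOpNorm Wp + matOpNorm Wm) * ((γ * (1 - P)).trace).re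
      - matOpNorm (Wp - Wm) * ((P * (1 - γ)).trace).re := by
  have hp := hWp.le_re_trace_mul_of_isIdempotentElem hP hPproj hγ0 hγ1 hδ
  have hm := hWm.re_trace_mul_le_of_isIdempotentElem hP hPproj hγ0 hγ1 hδ
  have hD := (hγ1.mul_mul_of_isHermitian hP).re_trace_mul_le_norm_mul (hWp.1.sub hWm.1)
  rw [trace_mul_mul_self_of_isIdempotentElem hPproj] at hD
  rw [Matrix.mul_sub, trace_sub, Complex.sub_re] at hD ⊢
  simp only [matOpNorm_eq_norm]
  linarith
end
end
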